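/- Let ι be a finitely generated abelian group, A a noetherian commutative ring graded by ι, and Q a G-primary homogeneous ideal of A. Then the A-module A⧸Q has no embedded primes: every associated prime of A⧸Q is a minimal prime over Q. -/

import Mathlib

/-- A homogeneous ideal `Q` of a graded ring `A` is `G`-primary if `Q ≠ A` and for all
homogeneous ideals `I`, `J` with `I·J ⊆ Q` and `J ⊄ Q`, one has `I ⊆ (√Q)*`. -/
def Ideal.IsGPrimary {ι : Type*} [AddCommGroup ι] [DecidableEq ι] {A : Type*} [CommRing A]
    (𝒜 : ι → AddSubgroup A) [GradedRing 𝒜] (Q : Ideal A) : Prop :=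
  Q ≠ ⊤ ∧ ∀ I J : Ideal A, I.IsHomogeneous 𝒜 → J.IsHomogeneous 𝒜 →
    I * J ≤ Q → ¬ J ≤ Q → I ≤ (Q.radical.homogeneousCore 𝒜).toIdeal

/-!
Write `ι ≅ ℤⁿ × T` with `T` finite and let `𝔭 = (Q : x)` be an associated prime of `A ⧸ Q`.
Coarsening the grading to `ℤⁿ`, ordered lexicographically, the top-component argument for
annihilators shows that `𝔭` is `ℤⁿ`-homogeneous. `G`-primarity puts every homogeneous element
of `𝔭` into `√Q`, hence into a minimal prime `𝔮 ⊆ 𝔭` of `Q`. An element of `𝔭` of degree `0`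
in `T` has `ℤⁿ`-components that are homogeneous, so `𝔭` and `𝔮` meet the subring `A₀` of
`T`-degree `0` in the same ideal. As `T` is finite, `A` is integral over `A₀` (a homogeneous `y`
has `y ^ #T ∈ A₀`), and incomparability gives `𝔭 = 𝔮`.
-/

open DirectSum

section Coarsening

variable {ι Λ A : Type*} [AddMonoid ι] [AddMonoid Λ] [DecidableEq ι] [Ring A]
  {𝒜 : ι → AddSubgroup A} [GradedRing 𝒜] {g : ι →+ Λ}

variable (𝒜 g) in
/-- The grading by `Λ` whose degree `c` part is the sum of the `𝒜 i` with `g i = c`. -/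
def coarseGrading (c : Λ) : AddSubgroup A :=
  ⨅ (i : ι) (_ : g i ≠ c), (GradedRing.proj 𝒜 i).ker

theorem mem_coarseGrading {c : Λ} {x : A} :
    x ∈ coarseGrading 𝒜 g c ↔ ∀ i, g i ≠ c → decompose 𝒜 x i = 0 := by
  simp [coarseGrading, AddSubgroup.mem_iInf, GradedRing.proj_apply]

theorem mem_coarseGrading_of_mem {i : ι} {x : A} (hx : x ∈ 𝒜 i) :
    x ∈ coarseGrading 𝒜 g (g i) :=
  mem_coarseGrading.2 fun _ hj ↦ by
    simpa using decompose_of_mem_ne 𝒜 hx fun h ↦ hj (h ▸ rfl)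

theorem eq_of_mem_coarseGrading {c : Λ} {x : A} (hx : x ∈ coarseGrading 𝒜 g c) {i : ι}
    (hi : decompose 𝒜 x i ≠ 0) : g i = c :=
  not_imp_comm.1 (mem_coarseGrading.1 hx i) hi

variable [DecidableEq Λ]

instance : SetLike.GradedMonoid (coarseGrading 𝒜 g) where
  one_mem := by simpa using mem_coarseGrading_of_mem (g := g) (SetLike.one_mem_graded 𝒜)
  mul_mem := by
    classical
    intro c d x y hx hy
    refine mem_coarseGrading.2 fun i hi ↦ ?_
    rw [decompose_mul, ← ZeroMemClass.coe_eq_zero, coe_mul_apply]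
    refine Finset.sum_eq_zero fun jk hjk ↦ ?_
    simp only [Finset.mem_filter, Finset.mem_product, DFinsupp.mem_support_iff] at hjk
    obtain ⟨⟨hj, hk⟩, rfl⟩ := hjk
    exact absurd (by rw [map_add, eq_of_mem_coarseGrading hx hj, eq_of_mem_coarseGrading hy hk]) hi

theorem decompose_coeAddMonoidHom_coarseGrading (u : ⨁ c, coarseGrading 𝒜 g c) (i : ι) :
    decompose 𝒜 (DirectSum.coeAddMonoidHom (coarseGrading 𝒜 g) u) i = decompose 𝒜 (u (g i)) i := by
  induction u using DirectSum.induction_on with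
  | zero => simp
  | of c y =>
    rw [coeAddMonoidHom_of]
    by_cases h : c = g i
    · subst h
      rw [of_eq_same]
    · rw [of_eq_of_ne _ _ _ (Ne.symm h), ZeroMemClass.coe_zero, decompose_zero,
        DirectSum.zero_apply]
      exact mem_coarseGrading.1 y.2 i (Ne.symm h)
  | add u v hu hv => simp [hu, hv]

theorem isInternal_coarseGrading : IsInternal (coarseGrading 𝒜 g) := by
  refine ⟨fun u v huv ↦ ?_, fun x ↦ ?_⟩
  · refine DFinsupp.ext fun c ↦ Subtype.ext <| (decompose 𝒜).injective <| DFinsupp.ext fun i ↦ ?_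
    by_cases h : g i = c
    · subst h
      simpa only [decompose_coeAddMonoidHom_coarseGrading] using congr(decompose 𝒜 $huv i)
    · rw [mem_coarseGrading.1 (u c).2 i h, mem_coarseGrading.1 (v c).2 i h]
  · induction x using Decomposition.inductionOn 𝒜 with
    | zero => exact ⟨0, map_zero _⟩
    | homogeneous m => exact ⟨of _ _ ⟨m, mem_coarseGrading_of_mem m.2⟩, coeAddMonoidHom_of _ _ _⟩
    | add x y hx hy =>
      obtain ⟨⟨u, rfl⟩, ⟨v, rfl⟩⟩ := And.intro hx hy
      exact ⟨u + v, map_add _ u v⟩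

noncomputable instance : GradedRing (coarseGrading 𝒜 g) :=
  { isInternal_coarseGrading.chooseDecomposition with }

theorem decompose_decompose_coarseGrading (x : A) (c : Λ) (i : ι) :
    decompose 𝒜 (decompose (coarseGrading 𝒜 g) x c : A) i =
      if g i = c then decompose 𝒜 x i else 0 := by
  have h := decompose_coeAddMonoidHom_coarseGrading (decompose (coarseGrading 𝒜 g) x) i
  rw [show DirectSum.coeAddMonoidHom _ (decompose _ x) = x from
    (decompose _).symm_apply_apply x] at h
  split_ifs with hi
  · rw [h, hi]
  · exact mem_coarseGrading.1 (SetLike.coe_mem _) i hi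

theorem Ideal.IsHomogeneous.coarse {I : Ideal A} (hI : I.IsHomogeneous 𝒜) :
    I.IsHomogeneous (coarseGrading 𝒜 g) := fun c x hx ↦
  hI.mem_iff.2 fun i ↦ by
    rw [decompose_decompose_coarseGrading]
    split_ifs
    exacts [hI i hx, zero_mem I]

theorem coe_decompose_mem_of_isHomogeneous_coarseGrading {T : Type*} [AddMonoid T] [DecidableEq T]
    {π : ι →+ T} (hgπ : Function.Injective (g.prod π)) {I : Ideal A}
    (hI : I.IsHomogeneous (coarseGrading 𝒜 g)) {z : A} (hz : z ∈ I)
    (hz0 : z ∈ coarseGrading 𝒜 π 0) (i : ι) : (decompose 𝒜 z i : A) ∈ I := by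
  by_cases hi : π i = 0
  -- the only index `j` with `g j = g i` in the support of `z` is `i` itself
  · suffices h : (decompose (coarseGrading 𝒜 g) z (g i) : A) = decompose 𝒜 z i from
      h ▸ hI (g i) hz
    refine (decompose 𝒜).injective (.trans (DFinsupp.ext fun j ↦ ?_) (decompose_coe 𝒜 _).symm)
    rw [decompose_decompose_coarseGrading]
    by_cases hji : j = i
    · subst hji
      rw [if_pos rfl, of_eq_same]
    · rw [of_eq_of_ne _ _ _ hji]
      split_ifs with hgj
      · exact mem_coarseGrading.1 hz0 j fun hπ ↦ hji (hgπ (Prod.ext hgj (hπ.trans hi.symm)))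
      · rfl
  · rw [mem_coarseGrading.1 hz0 i hi, ZeroMemClass.coe_zero]
    exact zero_mem I

end Coarsening

section LinearOrderedGrading

variable {Λ A : Type*} [LinearOrder Λ]

theorem Ideal.IsHomogeneous.of_forall_top_mem [AddMonoid Λ] [Ring A] {ℬ : Λ → AddSubgroup A}
    [GradedRing ℬ] {I : Ideal A}
    (h : ∀ a ∈ I, ∀ c, (∀ e, c < e → decompose ℬ a e = 0) → (decompose ℬ a c : A) ∈ I) :
    I.IsHomogeneous ℬ := by
  classical
  suffices ∀ s : Finset Λ, ∀ a ∈ I, (decompose ℬ a).support = s → ∀ c, (decompose ℬ a c : A) ∈ I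
    from fun c a ha ↦ this _ a ha rfl c
  intro s
  induction s using Finset.induction_on_max with
  | empty =>
    intro a _ ha c
    rw [DFinsupp.support_eq_empty.1 ha]
    exact zero_mem I
  | insert t s hst ih =>
    intro a ha hs c
    have ht : (decompose ℬ a t : A) ∈ I := h a ha t fun e he ↦
      DFinsupp.notMem_support_iff.1 fun he' ↦ by
        rw [hs, Finset.mem_insert] at he'
        rcases he' with rfl | he'
        exacts [lt_irrefl e he, lt_asymm he (hst e he')]
    have herase : decompose ℬ (a - decompose ℬ a t) = (decompose ℬ a).erase t := by
      rw [decompose_sub, decompose_coe, sub_eq_iff_eq_add']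
      exact (DFinsupp.single_add_erase t _).symm
    have hrest := ih _ (sub_mem ha ht) (by
      rw [herase, DFinsupp.support_erase, hs, Finset.erase_insert fun h ↦ lt_irrefl t (hst t h)])
    by_cases hc : c = t
    · rwa [hc]
    · simpa [herase, DFinsupp.erase_ne hc] using hrest c

variable [AddCommGroup Λ] [IsOrderedAddMonoid Λ] [CommRing A] {ℬ : Λ → AddSubgroup A}
  [GradedRing ℬ] {Q : Ideal A}

theorem Ideal.IsHomogeneous.top_mul_mem (hQ : Q.IsHomogeneous ℬ) {a y : A} (hay : a * y ∈ Q)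
    {c d : Λ} (ha : ∀ e, c < e → decompose ℬ a e = 0)
    (hy : ∀ e, d < e → (decompose ℬ y e : A) ∈ Q) :
    (decompose ℬ a c : A) * decompose ℬ y d ∈ Q := by
  classical
  set s := {ij ∈ (decompose ℬ a).support ×ˢ (decompose ℬ y).support | ij.1 + ij.2 = c + d}
  have hsum : (decompose ℬ (a * y) (c + d) : A) =
      ∑ ij ∈ s, (decompose ℬ a ij.1 : A) * decompose ℬ y ij.2 := by
    rw [decompose_mul, coe_mul_apply]
  have hrest : ∀ ij ∈ s.erase (c, d), (decompose ℬ a ij.1 : A) * decompose ℬ y ij.2 ∈ Q := by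
    rintro ⟨i, j⟩ hij
    simp only [s, Finset.mem_erase, Finset.mem_filter, Finset.mem_product,
      DFinsupp.mem_support_iff] at hij
    obtain ⟨hne, ⟨hi, -⟩, hij⟩ := hij
    have hic : i ≤ c := not_lt.1 fun h ↦ hi (ha i h)
    have hdj : d < j := not_le.1 fun hjd ↦
      hne (Prod.ext_iff.2 ((add_eq_add_iff_eq_and_eq hic hjd).1 hij))
    exact Q.mul_mem_left _ (hy j hdj)
  by_cases hcd : (c, d) ∈ s
  · have := hQ (c + d) hay
    rw [hsum, ← Finset.add_sum_erase s _ hcd] at this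
    exact (Q.add_mem_iff_left (Q.sum_mem hrest)).1 this
  · simp only [s, Finset.mem_filter, Finset.mem_product, DFinsupp.mem_support_iff, and_true,
      not_and_or, not_not] at hcd
    rcases hcd with h | h <;> simp [h]

theorem Ideal.IsHomogeneous.exists_pow_mul_mem (hQ : Q.IsHomogeneous ℬ) {a y : A}
    (hay : a * y ∈ Q) {c : Λ} (ha : ∀ e, c < e → decompose ℬ a e = 0) :
    ∃ m : ℕ, (decompose ℬ a c : A) ^ m * y ∈ Q := by
  classical
  set w := (decompose ℬ a c : A)
  let outside (y : A) : Finset Λ := {e ∈ (decompose ℬ y).support | (decompose ℬ y e : A) ∉ Q}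
  have mem_outside (y : A) (e : Λ) : e ∈ outside y ↔ (decompose ℬ y e : A) ∉ Q := by
    simp only [outside, Finset.mem_filter, DFinsupp.mem_support_iff, and_iff_right_iff_imp]
    exact fun h h0 ↦ h (by simp [h0])
  -- multiplying by `w` moves the top component of `y` outside `Q` into `Q`
  induction hn : (outside y).card using Nat.strong_induction_on generalizing y with
  | _ n ih =>
  obtain hy | hy := (outside y).eq_empty_or_nonempty
  · refine ⟨0, ?_⟩
    rw [pow_zero, one_mul, hQ.mem_iff]
    intro e
    by_contra he
    exact Finset.notMem_empty e (hy ▸ (mem_outside y e).2 he)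
  set d := (outside y).max' hy
  have hwd : w * decompose ℬ y d ∈ Q := hQ.top_mul_mem hay ha fun e he ↦ by
    by_contra h
    exact (Finset.le_max' _ e ((mem_outside y e).2 h)).not_gt he
  have hshift (e : Λ) : (decompose ℬ (w * y) (c + e) : A) = w * decompose ℬ y e :=
    coe_decompose_mul_add_of_left_mem ℬ (SetLike.coe_mem _)
  have hsub : outside (w * y) ⊆ ((outside y).erase d).map (addLeftEmbedding c) := by
    intro e he
    rw [mem_outside, ← add_neg_cancel_left c e, hshift] at he
    rw [← add_neg_cancel_left c e]
    refine Finset.mem_map_of_mem _ (Finset.mem_erase.2 ⟨fun h ↦ he (h ▸ hwd), ?_⟩)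
    exact (mem_outside y _).2 fun h ↦ he (Q.mul_mem_left w h)
  have hcard : (outside (w * y)).card < n := by
    calc _ ≤ _ := Finset.card_le_card hsub
      _ < (outside y).card := by
        rw [Finset.card_map]
        exact Finset.card_erase_lt_of_mem (Finset.max'_mem _ hy)
      _ = n := hn
  obtain ⟨m, hm⟩ := ih _ hcard (by rw [mul_left_comm]; exact Q.mul_mem_left w hay) rfl
  exact ⟨m + 1, by rwa [pow_succ, mul_assoc]⟩

theorem Ideal.IsHomogeneous.colon_singleton_of_isPrime (hQ : Q.IsHomogeneous ℬ) {x : A}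
    (hP : (Q.colon {x}).IsPrime) : (Q.colon {x}).IsHomogeneous ℬ :=
  .of_forall_top_mem fun a ha c hc ↦ by
    obtain ⟨m, hm⟩ := hQ.exists_pow_mul_mem (Submodule.mem_colon_singleton.1 ha) hc
    exact hP.mem_of_pow_mem m (Submodule.mem_colon_singleton.2 (by rwa [smul_eq_mul]))

end LinearOrderedGrading

theorem Ideal.exists_eq_colon_of_mem_associatedPrimes_quotient {R : Type*} [CommRing R]
    [IsNoetherianRing R] {Q 𝔭 : Ideal R} (h : 𝔭 ∈ associatedPrimes R (R ⧸ Q)) :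
    ∃ x : R, 𝔭 = Q.colon {x} := by
  obtain ⟨-, x, rfl⟩ := isAssociatedPrime_iff.1 h
  obtain ⟨x, rfl⟩ := Ideal.Quotient.mk_surjective x
  refine ⟨x, Ideal.ext fun a ↦ ?_⟩
  simp only [Submodule.mem_colon_singleton, Submodule.mem_bot, smul_eq_mul]
  rw [← Ideal.Quotient.eq_zero_iff_mem, map_mul]
  rfl

theorem SetLike.GradeZero.isIntegral_of_finite {T A : Type*} [AddCommGroup T] [Finite T]
    [DecidableEq T] [CommRing A] (ℬ : T → AddSubgroup A) [GradedRing ℬ] :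
    Algebra.IsIntegral (SetLike.GradeZero.subring ℬ) A := by
  refine ⟨fun x ↦ ?_⟩
  induction x using DirectSum.Decomposition.inductionOn ℬ with
  | zero => exact isIntegral_zero
  | homogeneous y =>
    have hy : (y : A) ^ Nat.card T ∈ ℬ 0 := by
      simpa [card_nsmul_eq_zero'] using SetLike.pow_mem_graded (Nat.card T) y.2
    exact IsIntegral.of_pow Nat.card_pos
      (isIntegral_algebraMap (R := SetLike.GradeZero.subring ℬ) (x := ⟨_, hy⟩))
  | add x y hx hy => exact hx.add hy

theorem Ideal.IsIntegral.eq_of_le_of_comap_le {R S : Type*} [CommRing R] [CommRing S]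
    [Algebra R S] [Algebra.IsIntegral R S] {P Q : Ideal S} [P.IsPrime] (hPQ : P ≤ Q)
    (hQP : Q.comap (algebraMap R S) ≤ P.comap (algebraMap R S)) : P = Q :=
  eq_of_le_of_not_lt hPQ fun hlt ↦ (Ideal.IsIntegral.comap_lt_comap hlt).not_ge hQP

section GPrimary

variable {ι A : Type*} [AddCommGroup ι] [DecidableEq ι] [CommRing A] {𝒜 : ι → AddSubgroup A}
  [GradedRing 𝒜] {Q : Ideal A}

theorem Ideal.IsGPrimary.mem_radical_of_mul_mem (hQ : Q.IsGPrimary 𝒜)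
    (hQh : Q.IsHomogeneous 𝒜) {a x : A} (ha : SetLike.IsHomogeneousElem 𝒜 a) (hax : a * x ∈ Q)
    (hx : x ∉ Q) : a ∈ Q.radical := by
  classical
  obtain ⟨i, hai⟩ := ha
  let J := Ideal.span (Set.range fun j ↦ (decompose 𝒜 x j : A))
  have hJ : J.IsHomogeneous 𝒜 :=
    Ideal.homogeneous_span 𝒜 _ (by rintro _ ⟨j, rfl⟩; exact ⟨j, SetLike.coe_mem _⟩)
  have hxJ : x ∈ J := by
    rw [← sum_support_decompose 𝒜 x]
    exact J.sum_mem fun j _ ↦ Ideal.subset_span ⟨j, rfl⟩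
  have hJa : J ≤ Q.colon {a} := Ideal.span_le.2 <| Set.range_subset_iff.2 fun j ↦ by
    rw [SetLike.mem_coe, Submodule.mem_colon_singleton, smul_eq_mul, mul_comm,
      ← coe_decompose_mul_add_of_left_mem 𝒜 hai]
    exact hQh _ hax
  have haJ : Ideal.span {a} * J ≤ Q := Ideal.span_singleton_mul_le_iff.2 fun z hz ↦ by
    simpa [mul_comm] using Submodule.mem_colon_singleton.1 (hJa hz)
  have hcore := hQ.2 _ J (Ideal.homogeneous_span 𝒜 _ (by simpa using ⟨i, hai⟩)) hJ haJ
    fun h ↦ hx (h hxJ)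
  exact Ideal.toIdeal_homogeneousCore_le 𝒜 _ (hcore (Ideal.mem_span_singleton_self a))

end GPrimary

theorem AddCommGroup.exists_addEquiv_lex_prod_finite (ι : Type*) [AddCommGroup ι]
    [AddGroup.FG ι] :
    ∃ (n : ℕ) (T : Type) (_ : AddCommGroup T) (_ : Finite T),
      Nonempty (ι ≃+ Lex (Fin n →₀ ℤ) × T) := by
  obtain ⟨n, κ, _, p, hp, e, ⟨φ⟩⟩ := AddCommGroup.equiv_free_prod_directSum_zmod ι
  have : ∀ j, NeZero (p j ^ e j) := fun j ↦ ⟨pow_ne_zero _ (hp j).ne_zero⟩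
  exact ⟨n, ⨁ j, ZMod (p j ^ e j), inferInstance, .of_equiv _ DFinsupp.equivFunOnFintype.symm,
    ⟨φ.trans ((toLexAddEquiv _).prodCongr (AddEquiv.refl _))⟩⟩

/-- Let `ι` be a finitely generated abelian group, `A` a noetherian commutative ring graded by
`ι`, and `Q` a `G`-primary homogeneous ideal of `A`.  Then `A ⧸ Q` has no embedded primes:
every associated prime of `A ⧸ Q` is a minimal prime over `Q`. -/
theorem Ideal.IsGPrimary.no_embedded_primes {ι : Type*} [AddCommGroup ι] [AddGroup.FG ι]
    [DecidableEq ι] {A : Type*} [CommRing A] [IsNoetherianRing A]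
    (𝒜 : ι → AddSubgroup A) [GradedRing 𝒜] (Q : Ideal A) (hQhom : Q.IsHomogeneous 𝒜)
    (hQ : Q.IsGPrimary 𝒜) :
    ∀ 𝔭 ∈ associatedPrimes A (A ⧸ Q), 𝔭 ∈ Q.minimalPrimes := by
  classical
  intro 𝔭 h𝔭
  have h𝔭p : 𝔭.IsPrime := h𝔭.isPrime
  obtain ⟨x, rfl⟩ := Ideal.exists_eq_colon_of_mem_associatedPrimes_quotient h𝔭
  have hxQ : x ∉ Q := fun hx ↦ h𝔭p.ne_top (Ideal.eq_top_iff_one _ |>.2 (by simpa using hx))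
  obtain ⟨𝔮, h𝔮, h𝔮𝔭⟩ := Ideal.exists_minimalPrimes_le (J := Q.colon {x})
    fun q hq ↦ Submodule.mem_colon_singleton.2 (Q.mul_mem_right x hq)
  have h𝔮p : 𝔮.IsPrime := h𝔮.1.1
  have hhom (a : A) (ha : a ∈ Q.colon {x}) (hh : SetLike.IsHomogeneousElem 𝒜 a) : a ∈ 𝔮 :=
    (h𝔮p.radical_le_iff.2 h𝔮.1.2)
      (hQ.mem_radical_of_mul_mem hQhom hh (Submodule.mem_colon_singleton.1 ha) hxQ)
  obtain ⟨n, T, _, _, ⟨φ⟩⟩ := AddCommGroup.exists_addEquiv_lex_prod_finite ι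
  -- the lemmas on linearly ordered gradings use the decidable equality of the order
  let _ : DecidableEq (Lex (Fin n →₀ ℤ)) := LinearOrder.toDecidableEq
  let f : ι →+ Lex (Fin n →₀ ℤ) := (AddMonoidHom.fst _ T).comp φ.toAddMonoidHom
  let π : ι →+ T := (AddMonoidHom.snd _ T).comp φ.toAddMonoidHom
  have hfπ : Function.Injective (f.prod π) := φ.injective
  have h𝔭f := (hQhom.coarse (g := f)).colon_singleton_of_isPrime h𝔭p
  have := SetLike.GradeZero.isIntegral_of_finite (coarseGrading 𝒜 π)
  refine (Ideal.IsIntegral.eq_of_le_of_comap_le (R := SetLike.GradeZero.subring (coarseGrading 𝒜 π))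
    h𝔮𝔭 fun z hz ↦ ?_) ▸ h𝔮
  change (z : A) ∈ 𝔮
  rw [← sum_support_decompose 𝒜 (z : A)]
  exact 𝔮.sum_mem fun i _ ↦ hhom _
    (coe_decompose_mem_of_isHomogeneous_coarseGrading hfπ h𝔭f hz z.2 i) ⟨i, SetLike.coe_mem _⟩
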